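/- arXiv:q-alg/9701012 — 4 statements merged into one kernel-verified Lean document; each statement's English description precedes it below -/
import Mathlib

section
/- The dual code D_{E8} = S_{E8}^⊥ contains S_{E8} (so S_{E8} is a self-orthogonal even code), has dimension 11, and has minimum weight 4: every nonzero codeword of D_{E8} has Hamming weight at least 4, and D_{E8} contains a codeword of weight exactly 4. -/
/-- The all-ones word `(1^16)`. -/
def w16All : Fin 16 → ZMod 2 := fun _ => 1

/-- The word `(0^8 1^8)`. -/
def w16Half : Fin 16 → ZMod 2 := fun i => if 8 ≤ i.val then 1 else 0

/-- The word `(0^4 1^4 0^4 1^4)`. -/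
def w16Quarter : Fin 16 → ZMod 2 := fun i => if 4 ≤ i.val % 8 then 1 else 0

/-- The word `(0^2 1^2)` repeated 4 times. -/
def w16Eighth : Fin 16 → ZMod 2 := fun i => if 2 ≤ i.val % 4 then 1 else 0

/-- The word `(01)` repeated 8 times. -/
def w16Alt : Fin 16 → ZMod 2 := fun i => if 1 ≤ i.val % 2 then 1 else 0

/-- The code `S_{E8}`: the binary linear code of length 16 spanned by
`(1^16)`, `(0^8 1^8)`, `(0^4 1^4 0^4 1^4)`, `((0^2 1^2)^4)` and `((01)^8)`. -/
def SE8 : Submodule (ZMod 2) (Fin 16 → ZMod 2) :=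
  Submodule.span (ZMod 2) {w16All, w16Half, w16Quarter, w16Eighth, w16Alt}

/-- The dual code `C^⊥ = {γ : Σ_i γ_i α_i = 0 for all α ∈ C}` of a binary code `C`
of length `n`. -/
def dualCode {n : ℕ} (C : Set (Fin n → ZMod 2)) : Submodule (ZMod 2) (Fin n → ZMod 2) where
  carrier := {c | ∀ a ∈ C, ∑ i, c i * a i = 0}
  add_mem' := by
    intro x y hx hy a ha
    have hx' := hx a ha
    have hy' := hy a ha
    simp only [Set.mem_setOf_eq, Pi.add_apply, add_mul, Finset.sum_add_distrib, hx', hy',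
      add_zero]
  zero_mem' := by
    intro a ha
    simp
  smul_mem' := by
    intro m x hx a ha
    have hx' := hx a ha
    calc ∑ i, (m • x) i * a i = m * ∑ i, x i * a i := by
          simp [Finset.mul_sum, mul_assoc]
      _ = 0 := by rw [hx', mul_zero]

/-- The code `D_{E8} = S_{E8}^⊥`. -/
def DE8 : Submodule (ZMod 2) (Fin 16 → ZMod 2) := dualCode (SE8 : Set (Fin 16 → ZMod 2))

/-- generators packaged as a family -/
def gensE8 : Fin 5 → (Fin 16 → ZMod 2) := ![w16All, w16Half, w16Quarter, w16Eighth, w16Alt]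

lemma gensE8_mem (j : Fin 5) : gensE8 j ∈ SE8 := by
  apply Submodule.subset_span
  fin_cases j <;> simp [gensE8, Set.mem_insert_iff]

lemma mem_DE8_iff (x : Fin 16 → ZMod 2) :
    x ∈ DE8 ↔ ∀ j : Fin 5, ∑ i, x i * gensE8 j i = 0 := by
  constructor
  · intro hx j
    exact hx (gensE8 j) (gensE8_mem j)
  · intro h a ha
    induction ha using Submodule.span_induction with
    | mem g hg =>
      rcases hg with h0 | h0 | h0 | h0 | h0 <;> subst h0
      · exact h 0
      · exact h 1
      · exact h 2
      · exact h 3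
      · exact h 4
    | zero => simp
    | add a b _ _ ha hb =>
      calc ∑ i, x i * (a + b) i = (∑ i, x i * a i) + ∑ i, x i * b i := by
            simp [Pi.add_apply, mul_add, Finset.sum_add_distrib]
        _ = 0 := by rw [ha, hb, add_zero]
    | smul m a _ ha =>
      calc ∑ i, x i * (m • a) i = m * ∑ i, x i * a i := by
            simp [Finset.mul_sum]; ring_nf; simp [mul_comm, mul_left_comm]
        _ = 0 := by rw [ha, mul_zero]

def dotG : (Fin 16 → ZMod 2) →ₗ[ZMod 2] (Fin 5 → ZMod 2) where
  toFun x := fun j => ∑ i, x i * gensE8 j i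
  map_add' x y := by
    funext j
    simp [add_mul, Finset.sum_add_distrib]
  map_smul' m x := by
    funext j
    simp [Finset.mul_sum, mul_assoc]

lemma DE8_eq_ker : DE8 = LinearMap.ker dotG := by
  ext x
  rw [mem_DE8_iff, LinearMap.mem_ker]
  constructor
  · intro h; funext j; exact h j
  · intro h j; exact congrFun h j

def rinvE8 : (Fin 5 → ZMod 2) → (Fin 16 → ZMod 2) := fun v i =>
  if i = 0 then v 0 + v 1 + v 2 + v 3 + v 4
  else if i = 8 then v 1 else if i = 4 then v 2 else if i = 2 then v 3
  else if i = 1 then v 4 else 0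

lemma dotG_surj : Function.Surjective dotG := by
  intro v
  exact ⟨rinvE8 v, funext fun j => by revert v j; decide⟩

lemma cast_hammingNorm (c : Fin 16 → ZMod 2) : (hammingNorm c : ZMod 2) = ∑ i, c i := by
  have h1 : ∀ x : ZMod 2, x ≠ 0 → x = 1 := by decide
  rw [hammingNorm, ← Finset.sum_filter_ne_zero Finset.univ]
  rw [Finset.sum_congr rfl (fun i hi => h1 _ (Finset.mem_filter.mp hi).2)]
  simp

lemma even_of_mem_DE8 {c : Fin 16 → ZMod 2} (hc : c ∈ DE8) : Even (hammingNorm c) := by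
  have h0 := (mem_DE8_iff c).mp hc 0
  have : (hammingNorm c : ZMod 2) = 0 := by
    rw [cast_hammingNorm]
    simpa [gensE8, w16All] using h0
  rw [ZMod.natCast_eq_zero_iff] at this
  exact even_iff_two_dvd.mpr this

lemma min_weight {c : Fin 16 → ZMod 2} (hc : c ∈ DE8) (hne : c ≠ 0) : 4 ≤ hammingNorm c := by
  by_contra hlt
  push_neg at hlt
  have heven := even_of_mem_DE8 hc
  have hnz : hammingNorm c ≠ 0 := fun h => hne (hammingNorm_eq_zero.mp h)
  have h2 : hammingNorm c = 2 := by rcases heven with ⟨k, hk⟩; omega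
  -- extract the two support elements
  rw [hammingNorm] at h2
  obtain ⟨i, j, hij, hset⟩ := Finset.card_eq_two.mp h2
  have hci : c i = 1 := by
    have : i ∈ Finset.filter (fun i => c i ≠ 0) Finset.univ := by rw [hset]; simp
    have := (Finset.mem_filter.mp this).2
    revert this; have h1 : ∀ x : ZMod 2, x ≠ 0 → x = 1 := by decide
    exact h1 _
  have hcj : c j = 1 := by
    have : j ∈ Finset.filter (fun i => c i ≠ 0) Finset.univ := by rw [hset]; simp
    have := (Finset.mem_filter.mp this).2
    revert this; have h1 : ∀ x : ZMod 2, x ≠ 0 → x = 1 := by decide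
    exact h1 _
  have key : ∀ k : Fin 5, gensE8 k i = gensE8 k j := by
    intro k
    have hk := (mem_DE8_iff c).mp hc k
    have : ∑ t, c t * gensE8 k t = gensE8 k i + gensE8 k j := by
      rw [← Finset.sum_filter_ne_zero Finset.univ (f := fun t => c t * gensE8 k t)]
      have hsub : Finset.filter (fun t => c t * gensE8 k t ≠ 0) Finset.univ ⊆ {i, j} := by
        intro t ht
        have := (Finset.mem_filter.mp ht).2
        have hct : c t ≠ 0 := fun h => this (by rw [h, zero_mul])
        have : t ∈ Finset.filter (fun i => c i ≠ 0) Finset.univ := by simp [hct]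
        rw [hset] at this; exact this
      rw [Finset.sum_subset hsub]
      · rw [Finset.sum_pair hij, hci, hcj, one_mul, one_mul]
      · intro t _ ht
        by_contra h
        exact ht (Finset.mem_filter.mpr ⟨Finset.mem_univ t, h⟩)
    rw [this] at hk
    have : ∀ a b : ZMod 2, a + b = 0 → a = b := by decide
    exact this _ _ hk
  have hinj : ∀ i j : Fin 16, (∀ k : Fin 5, gensE8 k i = gensE8 k j) → i = j := by decide
  exact hij (hinj i j key)


/-- `D_{E8} = S_{E8}^⊥` contains `S_{E8}` (so `S_{E8}` is a self-orthogonal even code),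
has dimension 11, and has minimum weight 4. -/
theorem DE8_contains_SE8_dim_and_min_weight :
    (SE8 : Set (Fin 16 → ZMod 2)) ⊆ (DE8 : Set (Fin 16 → ZMod 2)) ∧
    (∀ c ∈ SE8, Even (hammingNorm c)) ∧
    Module.finrank (ZMod 2) DE8 = 11 ∧
    (∀ c ∈ DE8, c ≠ 0 → 4 ≤ hammingNorm c) ∧
    (∃ c ∈ DE8, hammingNorm c = 4) := by
  have hsub : (SE8 : Set (Fin 16 → ZMod 2)) ⊆ (DE8 : Set (Fin 16 → ZMod 2)) := by
    intro x hx
    have : SE8 ≤ DE8 := by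
      rw [SE8, Submodule.span_le]
      intro g hg
      rw [SetLike.mem_coe, mem_DE8_iff]
      rcases hg with h0 | h0 | h0 | h0 | h0 <;> subst h0 <;> decide
    exact this hx
  refine ⟨hsub, fun c hc => even_of_mem_DE8 (hsub hc), ?_, fun c hc => min_weight hc, ?_⟩
  · have hker : Module.finrank (ZMod 2) (LinearMap.ker dotG) = 11 := by
      have h := LinearMap.finrank_range_add_finrank_ker dotG
      rw [LinearMap.range_eq_top.mpr dotG_surj] at h
      simp [Module.finrank_pi] at h ⊢
      omega
    rw [DE8_eq_ker]; exact hker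
  · refine ⟨fun i => if i.val < 4 then 1 else 0, ?_, by decide⟩
    rw [mem_DE8_iff]
    decide
end

section
/- Writing words of F_2^16 as quadruples (a,b,c,d) with a,b,c,d ∈ F_2^4, let E_α be the subcode {(δ,δ,0,0) : δ ∈ F_2^4 even} ∪ {(δ,δ^c,0,0) : δ ∈ F_2^4 even}, let H_β = {(δ,0,δ,0) : δ even} ∪ {(δ,0,δ^c,0) : δ even}, and let H_{α+β} = {(0,δ,δ,0) : δ even} ∪ {(0,δ,δ^c,0) : δ even}, where δ^c = (1111) + δ. Then H_β + E_α = H_{α+β} + E_α as subspaces of F_2^16. -/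
/-- Words of `F₂¹⁶` written as quadruples `(a,b,c,d)` of words in `F₂⁴`. -/
abbrev Word16 : Type := Fin 4 → Fin 4 → ZMod 2

/-- A word `δ ∈ F₂⁴` is even if its Hamming weight is even. -/
def isEven4 (δ : Fin 4 → ZMod 2) : Prop := Even (hammingNorm δ)

/-- The complement `δ^c = (1111) + δ` of a word `δ ∈ F₂⁴`. -/
def compl4 (δ : Fin 4 → ZMod 2) : Fin 4 → ZMod 2 := (fun _ => 1) + δ

/-- `E_α = {(δ,δ,0,0) : δ even} ∪ {(δ,δ^c,0,0) : δ even}`. -/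
def Ealpha : Set Word16 :=
  {w | ∃ δ : Fin 4 → ZMod 2, isEven4 δ ∧ (w = ![δ, δ, 0, 0] ∨ w = ![δ, compl4 δ, 0, 0])}

/-- `H_β = {(δ,0,δ,0) : δ even} ∪ {(δ,0,δ^c,0) : δ even}`. -/
def Hbeta : Set Word16 :=
  {w | ∃ δ : Fin 4 → ZMod 2, isEven4 δ ∧ (w = ![δ, 0, δ, 0] ∨ w = ![δ, 0, compl4 δ, 0])}

/-- `H_{α+β} = {(0,δ,δ,0) : δ even} ∪ {(0,δ,δ^c,0) : δ even}`. -/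
def HalphaBeta : Set Word16 :=
  {w | ∃ δ : Fin 4 → ZMod 2, isEven4 δ ∧ (w = ![0, δ, δ, 0] ∨ w = ![0, δ, compl4 δ, 0])}

private theorem z2aac (a b : ZMod 2) : a + (a + b) = b := by revert a b; decide

private theorem isEven4_add (δ ε : Fin 4 → ZMod 2) (h1 : isEven4 δ) (h2 : isEven4 ε) :
    isEven4 (δ + ε) := by
  revert h1 h2; simp only [isEven4]; revert δ ε; decide

/-- `H_β + E_α = H_{α+β} + E_α` as subspaces of `F₂¹⁶` (condition (2.2) of
Hypotheses I for the pair `(D_{E8}, S_{E8})` with `α = (1^8 0^8)` and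
`β = (1^4 0^4 1^4 0^4)`). -/
theorem Hbeta_add_Ealpha_eq_HalphaBeta_add_Ealpha :
    {x : Word16 | ∃ h ∈ Hbeta, ∃ e ∈ Ealpha, x = h + e} =
      {x : Word16 | ∃ h ∈ HalphaBeta, ∃ e ∈ Ealpha, x = h + e} := by
  ext x
  simp only [Set.mem_setOf_eq, Hbeta, HalphaBeta, Ealpha]
  constructor
  · rintro ⟨h, ⟨δ, hδ, hcase⟩, e, ⟨ε, hε, hecase⟩, rfl⟩
    rcases hcase with rfl | rfl <;> rcases hecase with rfl | rfl
    · exact ⟨![0, δ, δ, 0], ⟨δ, hδ, Or.inl rfl⟩,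
        ![δ + ε, δ + ε, 0, 0], ⟨δ + ε, isEven4_add δ ε hδ hε, Or.inl rfl⟩, by
        funext i j
        fin_cases i <;> simp [compl4, z2aac, add_assoc, add_left_comm, add_comm,
          CharTwo.add_self_eq_zero]⟩
    · exact ⟨![0, δ, δ, 0], ⟨δ, hδ, Or.inl rfl⟩,
        ![δ + ε, compl4 (δ + ε), 0, 0], ⟨δ + ε, isEven4_add δ ε hδ hε, Or.inr rfl⟩, by
        funext i j
        fin_cases i <;> simp [compl4, z2aac, add_assoc, add_left_comm, add_comm,
          CharTwo.add_self_eq_zero]⟩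
    · exact ⟨![0, δ, compl4 δ, 0], ⟨δ, hδ, Or.inr rfl⟩,
        ![δ + ε, δ + ε, 0, 0], ⟨δ + ε, isEven4_add δ ε hδ hε, Or.inl rfl⟩, by
        funext i j
        fin_cases i <;> simp [compl4, z2aac, add_assoc, add_left_comm, add_comm,
          CharTwo.add_self_eq_zero]⟩
    · exact ⟨![0, δ, compl4 δ, 0], ⟨δ, hδ, Or.inr rfl⟩,
        ![δ + ε, compl4 (δ + ε), 0, 0], ⟨δ + ε, isEven4_add δ ε hδ hε, Or.inr rfl⟩, by
        funext i j
        fin_cases i <;> simp [compl4, z2aac, add_assoc, add_left_comm, add_comm,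
          CharTwo.add_self_eq_zero]⟩
  · rintro ⟨h, ⟨δ, hδ, hcase⟩, e, ⟨ε, hε, hecase⟩, rfl⟩
    rcases hcase with rfl | rfl <;> rcases hecase with rfl | rfl
    · exact ⟨![δ, 0, δ, 0], ⟨δ, hδ, Or.inl rfl⟩,
        ![δ + ε, δ + ε, 0, 0], ⟨δ + ε, isEven4_add δ ε hδ hε, Or.inl rfl⟩, by
        funext i j
        fin_cases i <;> simp [compl4, z2aac, add_assoc, add_left_comm, add_comm,
          CharTwo.add_self_eq_zero]⟩
    · exact ⟨![δ, 0, δ, 0], ⟨δ, hδ, Or.inl rfl⟩,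
        ![δ + ε, compl4 (δ + ε), 0, 0], ⟨δ + ε, isEven4_add δ ε hδ hε, Or.inr rfl⟩, by
        funext i j
        fin_cases i <;> simp [compl4, z2aac, add_assoc, add_left_comm, add_comm,
          CharTwo.add_self_eq_zero]⟩
    · exact ⟨![δ, 0, compl4 δ, 0], ⟨δ, hδ, Or.inr rfl⟩,
        ![δ + ε, δ + ε, 0, 0], ⟨δ + ε, isEven4_add δ ε hδ hε, Or.inl rfl⟩, by
        funext i j
        fin_cases i <;> simp [compl4, z2aac, add_assoc, add_left_comm, add_comm,
          CharTwo.add_self_eq_zero]⟩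
    · exact ⟨![δ, 0, compl4 δ, 0], ⟨δ, hδ, Or.inr rfl⟩,
        ![δ + ε, compl4 (δ + ε), 0, 0], ⟨δ + ε, isEven4_add δ ε hδ hε, Or.inr rfl⟩, by
        funext i j
        fin_cases i <;> simp [compl4, z2aac, add_assoc, add_left_comm, add_comm,
          CharTwo.add_self_eq_zero]⟩
end

section
/- Let C be the set of affine functions F_2^4 → F_2 (functions v ↦ ℓ(v) + c with ℓ: F_2^4 → F_2 linear and c ∈ F_2), regarded as the first-order Reed–Muller code RM(1,4) with coordinates indexed by F_2^4. A permutation σ of F_2^4 satisfies {f ∘ σ : f ∈ C} = C if and only if σ is an affine transformation, i.e., σ(v) = A(v) + b for some invertible linear map A on F_2^4 and some b ∈ F_2^4. Consequently, the automorphism group of RM(1,4) is isomorphic to the semidirect product F_2^4 ⋊ GL(4, F_2). -/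
/-- `F₂⁴`, identified with the set of coordinate positions of `RM(1,4)`. -/
abbrev V4 : Type := Fin 4 → ZMod 2

/-- The first-order Reed–Muller code `RM(1,4)`, with coordinates indexed by
`F₂⁴`: the set of evaluation vectors of affine functions `F₂⁴ → F₂`, i.e.
functions `v ↦ ℓ(v) + c` with `ℓ` linear and `c` constant. -/
def rmCode : Set (V4 → ZMod 2) :=
  {f | ∃ (ℓ : V4 →ₗ[ZMod 2] ZMod 2) (c : ZMod 2), f = fun v => ℓ v + c}

/-- The automorphism group of `RM(1,4)`: the group of permutations `σ` of the
coordinate positions such that `{f ∘ σ : f ∈ C} = C`. -/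
def autRM : Subgroup (Equiv.Perm V4) where
  carrier := {σ | (fun f => f ∘ ⇑σ) '' rmCode = rmCode}
  one_mem' := by
    show (fun f : V4 → ZMod 2 => f ∘ ⇑(1 : Equiv.Perm V4)) '' rmCode = rmCode
    have h : (fun f : V4 → ZMod 2 => f ∘ ⇑(1 : Equiv.Perm V4)) = id := by
      funext f; rfl
    rw [h, Set.image_id]
  mul_mem' := by
    intro a b ha hb
    show (fun f : V4 → ZMod 2 => f ∘ ⇑(a * b)) '' rmCode = rmCode
    have h : (fun f : V4 → ZMod 2 => f ∘ ⇑(a * b)) =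
        (fun f : V4 → ZMod 2 => f ∘ ⇑b) ∘ fun f : V4 → ZMod 2 => f ∘ ⇑a := by
      funext f; rfl
    rw [h, Set.image_comp, ha, hb]
  inv_mem' := by
    intro a ha
    show (fun f : V4 → ZMod 2 => f ∘ ⇑a⁻¹) '' rmCode = rmCode
    conv_lhs => rw [← ha]
    rw [← Set.image_comp]
    have h : ((fun f : V4 → ZMod 2 => f ∘ ⇑a⁻¹) ∘ fun f : V4 → ZMod 2 => f ∘ ⇑a)
        = id := by
      funext f
      funext v
      simp
    rw [h, Set.image_id]

/-- The natural action of `GL(4, F₂)` (the group of invertible linear maps on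
`F₂⁴`) on the (multiplicatively written) translation group `F₂⁴`. -/
def phiRM : (V4 ≃ₗ[ZMod 2] V4) →* MulAut (Multiplicative V4) where
  toFun A := AddEquiv.toMultiplicative A.toAddEquiv
  map_one' := by ext x; rfl
  map_mul' A B := by ext x; rfl

/-!
If `σ` preserves the affine functions, then `ℓ ∘ σ` is affine for every linear functional `ℓ`,
so `ℓ ∘ (σ - σ 0)` is linear. Functionals separate points, hence `σ - σ 0` is itself linear,
and it is bijective because `σ` is. Conversely affine maps compose to affine maps. The affine
permutations `v ↦ A v + b` are exactly the image of the homomorphism `⟨b, A⟩ ↦ (v ↦ A v + b)`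
out of `F₂⁴ ⋊ GL(4, F₂)`, which is injective because `b` and `A` are recovered from the values.
-/

open Module

section AffineFunctions

variable {R V W : Type*} [CommRing R] [AddCommGroup V] [Module R V] [AddCommGroup W] [Module R W]

variable (R V) in
def affineFunctions : Set (V → R) :=
  {f | ∃ (ℓ : V →ₗ[R] R) (c : R), f = fun v => ℓ v + c}

theorem comp_mem_affineFunctions {f : V → R} (hf : f ∈ affineFunctions R V) {σ : V → V}
    (A : V →ₗ[R] V) (b : V) (hσ : ∀ v, σ v = A v + b) : f ∘ σ ∈ affineFunctions R V := by
  obtain ⟨ℓ, c, rfl⟩ := hf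
  refine ⟨ℓ ∘ₗ A, ℓ b + c, funext fun v => ?_⟩
  simp only [Function.comp_apply, hσ, map_add, LinearMap.comp_apply, add_assoc]

theorem eq_of_forall_dual_eq [Projective R W] {x y : W} (h : ∀ ℓ : Dual R W, ℓ x = ℓ y) :
    x = y :=
  sub_eq_zero.1 <| (forall_dual_apply_eq_zero_iff R _).1 fun ℓ => by rw [map_sub, h, sub_self]

theorem exists_linearMap_eq_of_forall_dual_comp [Projective R W] (T : V → W)
    (h : ∀ ℓ : Dual R W, ∃ ℓ' : Dual R V, ∀ v, ℓ (T v) = ℓ' v) :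
    ∃ T' : V →ₗ[R] W, ⇑T' = T := by
  choose ℓ' hℓ' using h
  refine ⟨{ toFun := T, map_add' := fun u w => ?_, map_smul' := fun c v => ?_ }, rfl⟩
  · exact eq_of_forall_dual_eq (R := R) fun ℓ => by simp only [map_add, hℓ']
  · exact eq_of_forall_dual_eq (R := R) fun ℓ => by simp only [map_smul, hℓ', RingHom.id_apply]

theorem exists_linearMap_of_forall_dual_comp_mem [Projective R W] (σ : V → W)
    (h : ∀ ℓ : Dual R W, ℓ ∘ σ ∈ affineFunctions R V) :
    ∃ T : V →ₗ[R] W, ∀ v, σ v = T v + σ 0 := by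
  have h_lin : ∀ ℓ : Dual R W, ∃ ℓ' : Dual R V, ∀ v, ℓ (σ v - σ 0) = ℓ' v := by
    intro ℓ
    obtain ⟨ℓ', c, hc⟩ := h ℓ
    have hσ : ∀ v, ℓ (σ v) = ℓ' v + c := congrFun hc
    exact ⟨ℓ', fun v => by rw [map_sub, hσ, hσ, map_zero, zero_add, add_sub_cancel_right]⟩
  obtain ⟨T, hT⟩ := exists_linearMap_eq_of_forall_dual_comp _ h_lin
  exact ⟨T, fun v => by rw [hT, sub_add_cancel]⟩

theorem image_comp_affineFunctions_eq_iff [Projective R V] (σ : Equiv.Perm V) :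
    (fun f => f ∘ ⇑σ) '' affineFunctions R V = affineFunctions R V ↔
      ∃ (A : V ≃ₗ[R] V) (b : V), ∀ v, σ v = A v + b := by
  constructor
  · intro hσ
    have h_comp : ∀ ℓ : Dual R V, ℓ ∘ σ ∈ affineFunctions R V := fun ℓ =>
      hσ ▸ ⟨_, ⟨ℓ, 0, by simp only [add_zero]⟩, rfl⟩
    obtain ⟨T, hT⟩ := exists_linearMap_of_forall_dual_comp_mem σ h_comp
    have hT_bij : Function.Bijective T := by
      have : ⇑T = (· - σ 0) ∘ σ := funext fun v => by simp [hT v]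
      rw [this]
      exact (Equiv.subRight (σ 0)).bijective.comp σ.bijective
    exact ⟨LinearEquiv.ofBijective T hT_bij, σ 0, hT⟩
  · rintro ⟨A, b, hσ⟩
    have hσ_symm : ∀ v, σ.symm v = A.symm v + -A.symm b := fun v =>
      σ.injective <| by rw [Equiv.apply_symm_apply, hσ]; simp
    refine subset_antisymm ?_ fun f hf => ⟨f ∘ σ.symm, ?_, by ext; simp⟩
    · rintro _ ⟨f, hf, rfl⟩
      exact comp_mem_affineFunctions hf A.toLinearMap b hσ
    · exact comp_mem_affineFunctions hf A.symm.toLinearMap (-A.symm b) hσ_symm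

end AffineFunctions

section SemidirectProduct

variable {R V : Type*} [Semiring R] [AddCommGroup V] [Module R V]

def affinePermHom (φ : (V ≃ₗ[R] V) →* MulAut (Multiplicative V))
    (hφ : ∀ A x, φ A x = Multiplicative.ofAdd (A x.toAdd)) :
    Multiplicative V ⋊[φ] (V ≃ₗ[R] V) →* Equiv.Perm V where
  toFun p := p.right.toEquiv.trans (Equiv.addRight p.left.toAdd)
  map_one' := Equiv.ext fun v => by simp
  map_mul' p q := Equiv.ext fun v => by
    simp only [SemidirectProduct.mul_right, SemidirectProduct.mul_left, hφ, toAdd_mul, toAdd_ofAdd,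
      Equiv.trans_apply, LinearEquiv.coe_toEquiv, LinearEquiv.mul_apply, Equiv.coe_addRight,
      Equiv.Perm.coe_mul, Function.comp_apply, map_add]
    abel

variable {φ : (V ≃ₗ[R] V) →* MulAut (Multiplicative V)}
  {hφ : ∀ A x, φ A x = Multiplicative.ofAdd (A x.toAdd)}

@[simp]
theorem affinePermHom_apply (p : Multiplicative V ⋊[φ] (V ≃ₗ[R] V)) (v : V) :
    affinePermHom φ hφ p v = p.right v + p.left.toAdd :=
  rfl

theorem affinePermHom_injective : Function.Injective (affinePermHom φ hφ) := by
  intro p q hpq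
  have h_apply (v : V) : p.right v + p.left.toAdd = q.right v + q.left.toAdd := by
    simpa using DFunLike.congr_fun hpq v
  have h_left : p.left.toAdd = q.left.toAdd := by simpa using h_apply 0
  refine SemidirectProduct.ext h_left (LinearEquiv.ext fun v => ?_)
  simpa [h_left] using h_apply v

theorem mem_range_affinePermHom {σ : Equiv.Perm V} :
    σ ∈ (affinePermHom φ hφ).range ↔ ∃ (A : V ≃ₗ[R] V) (b : V), ∀ v, σ v = A v + b := by
  constructor
  · rintro ⟨p, rfl⟩
    exact ⟨p.right, p.left.toAdd, fun v => rfl⟩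
  · rintro ⟨A, b, hσ⟩
    exact ⟨⟨Multiplicative.ofAdd b, A⟩, Equiv.ext fun v => (hσ v).symm⟩

end SemidirectProduct

/-- A permutation `σ` of `F₂⁴` maps `RM(1,4)` onto itself if and only if `σ` is an
affine transformation `v ↦ A v + b` with `A ∈ GL(4,F₂)` and `b ∈ F₂⁴`;
consequently the automorphism group of `RM(1,4)` is isomorphic to the semidirect
product `F₂⁴ ⋊ GL(4, F₂)`. -/
theorem autRM_affine_and_semidirect :
    (∀ σ : Equiv.Perm V4,
      (fun f => f ∘ ⇑σ) '' rmCode = rmCode ↔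
        ∃ (A : V4 ≃ₗ[ZMod 2] V4) (b : V4), ∀ v, σ v = A v + b) ∧
    Nonempty (autRM ≃* Multiplicative V4 ⋊[phiRM] (V4 ≃ₗ[ZMod 2] V4)) := by
  have hφ : ∀ A x, phiRM A x = Multiplicative.ofAdd (A x.toAdd) := fun _ _ => rfl
  have h_range : autRM = (affinePermHom phiRM hφ).range := by
    ext σ
    exact (image_comp_affineFunctions_eq_iff σ).trans mem_range_affinePermHom.symm
  exact ⟨image_comp_affineFunctions_eq_iff, ⟨(MulEquiv.subgroupCongr h_range).trans
    (MonoidHom.ofInjective affinePermHom_injective).symm⟩⟩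
end

section
/- For every n ≥ 1, the code S^♮(n) of length 16 + 32n, spanned by the 2n words ({0^16}^i, 1^16, {0^16}^{2n-i}) for i = 1,...,2n together with all words (α, α, ..., α) (2n+1 equal blocks) with α ∈ S_{E8}, is an even self-orthogonal code: every codeword has even Hamming weight, and S^♮(n) ⊆ (S^♮(n))^⊥. -/
/-- The code `S^♮(n)` of length `16 + 32n`, with words written as `(2n+1)`-tuples
of blocks of length 16: it is spanned by the `2n` words
`({0^16}^i, 1^16, {0^16}^{2n-i})` for `i = 1, …, 2n` together with all words
`(α, α, …, α)` with `α ∈ S_{E8}`. -/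
def SnatN (n : ℕ) : Submodule (ZMod 2) (Fin (2 * n + 1) → Fin 16 → ZMod 2) :=
  Submodule.span (ZMod 2)
    ({w | ∃ i : Fin (2 * n), w = fun b => if b.val = i.val + 1 then w16All else 0} ∪
      {w | ∃ α ∈ SE8, w = fun _ => α})


/-! ### Auxiliary lemmas -/

private lemma zmod2_sq : ∀ x : ZMod 2, x * x = x := by decide

private lemma zmod2_ite (x : ZMod 2) : (if x ≠ 0 then (1 : ZMod 2) else 0) = x := by
  revert x; decide

private lemma zmod16 : ((16 : ℕ) : ZMod 2) = 0 := by decide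

private lemma zmod16' : (16 : ZMod 2) = 0 := by decide

/-- The dot product with a fixed word, as a linear map (length 16). -/
private def dotL16 (α : Fin 16 → ZMod 2) : (Fin 16 → ZMod 2) →ₗ[ZMod 2] ZMod 2 where
  toFun u := ∑ i, α i * u i
  map_add' u v := by simp [mul_add, Finset.sum_add_distrib]
  map_smul' c u := by simp [Finset.mul_sum, mul_left_comm]

/-- The coordinate-sum linear map (length 16). -/
private def sumL16 : (Fin 16 → ZMod 2) →ₗ[ZMod 2] ZMod 2 where
  toFun u := ∑ i, u i
  map_add' u v := by simp [Finset.sum_add_distrib]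
  map_smul' c u := by simp [Finset.mul_sum]

private lemma mem_gens_SE8 {α : Fin 16 → ZMod 2}
    (h : α ∈ ({w16All, w16Half, w16Quarter, w16Eighth, w16Alt} :
      Set (Fin 16 → ZMod 2))) :
    α = w16All ∨ α = w16Half ∨ α = w16Quarter ∨ α = w16Eighth ∨ α = w16Alt := by
  simpa [Set.mem_insert_iff] using h

private lemma SE8_sum_zero : ∀ α ∈ SE8, ∑ i, α i = 0 := by
  have h : SE8 ≤ LinearMap.ker sumL16 := by
    rw [SE8, Submodule.span_le]
    intro x hx
    rcases mem_gens_SE8 hx with h|h|h|h|h <;> subst h <;>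
      · show sumL16 _ = 0
        simp only [sumL16, LinearMap.coe_mk, AddHom.coe_mk]
        decide
  intro α hα
  simpa [sumL16] using h hα

private lemma SE8_dot_gen : ∀ g ∈ ({w16All, w16Half, w16Quarter, w16Eighth, w16Alt} :
    Set (Fin 16 → ZMod 2)), ∀ α ∈ SE8, ∑ i, g i * α i = 0 := by
  intro g hg α hα
  have h : SE8 ≤ LinearMap.ker (dotL16 g) := by
    rw [SE8, Submodule.span_le]
    intro x hx
    show dotL16 g x = 0
    simp only [dotL16, LinearMap.coe_mk, AddHom.coe_mk]
    rcases mem_gens_SE8 hg with h|h|h|h|h <;> subst h <;>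
      rcases mem_gens_SE8 hx with h'|h'|h'|h'|h' <;> subst h' <;> decide
  simpa [dotL16] using h hα

private lemma SE8_dot_zero : ∀ α ∈ SE8, ∀ β ∈ SE8, ∑ i, α i * β i = 0 := by
  intro α hα β hβ
  have h : SE8 ≤ LinearMap.ker (dotL16 β) := by
    rw [SE8, Submodule.span_le]
    intro x hx
    show dotL16 β x = 0
    simp only [dotL16, LinearMap.coe_mk, AddHom.coe_mk]
    calc ∑ i, β i * x i = ∑ i, x i * β i := by simp [mul_comm]
    _ = 0 := SE8_dot_gen x hx β hβ
  have := h hα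
  simpa [dotL16, mul_comm] using this

/-- The dot product with a fixed word, as a linear map (length 16+32n). -/
private def dotLn (n : ℕ) (w : Fin (2 * n + 1) → Fin 16 → ZMod 2) :
    (Fin (2 * n + 1) → Fin 16 → ZMod 2) →ₗ[ZMod 2] ZMod 2 where
  toFun u := ∑ b, ∑ i, w b i * u b i
  map_add' u v := by simp [mul_add, Finset.sum_add_distrib]
  map_smul' c u := by simp [Finset.mul_sum, mul_left_comm]

private abbrev genSet (n : ℕ) : Set (Fin (2 * n + 1) → Fin 16 → ZMod 2) :=
  ({w | ∃ i : Fin (2 * n), w = fun b => if b.val = i.val + 1 then w16All else 0} ∪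
      {w | ∃ α ∈ SE8, w = fun _ => α})

private lemma gen_dot_gen (n : ℕ) :
    ∀ g ∈ genSet n, ∀ g' ∈ genSet n, ∑ b, ∑ i, g b i * g' b i = 0 := by
  rintro g (⟨i, rfl⟩ | ⟨α, hα, rfl⟩) g' (⟨j, rfl⟩ | ⟨β, hβ, rfl⟩)
  · -- e_i · e_j : each inner sum is 16 • constant = 0
    have : ∀ b : Fin (2 * n + 1),
        (∑ k, (if b.val = i.val + 1 then w16All else 0) k *
              (if b.val = j.val + 1 then w16All else 0) k) = 0 := by
      intro b
      simp only [ite_apply, Pi.zero_apply, w16All]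
      rw [Finset.sum_const, Finset.card_univ, Fintype.card_fin, nsmul_eq_mul]
      simp [zmod16, zmod16']
    simp [this]
  · -- e_i · const β
    have hs := SE8_sum_zero β hβ
    have : ∀ b : Fin (2 * n + 1),
        (∑ k, (if b.val = i.val + 1 then w16All else 0) k * β k) = 0 := by
      intro b
      simp only [ite_apply, Pi.zero_apply, w16All]
      by_cases h : b.val = i.val + 1 <;> simp [h, hs]
    simp [this]
  · -- const α · e_j
    have hs := SE8_sum_zero α hα
    have : ∀ b : Fin (2 * n + 1),
        (∑ k, α k * (if b.val = j.val + 1 then w16All else 0) k) = 0 := by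
      intro b
      simp only [ite_apply, Pi.zero_apply, w16All]
      by_cases h : b.val = j.val + 1 <;> simp [h, hs]
    simp [this]
  · -- const α · const β
    have hs := SE8_dot_zero α hα β hβ
    simp [hs]

private lemma SnatN_dot (n : ℕ) :
    ∀ w ∈ SnatN n, ∀ u ∈ SnatN n, ∑ b, ∑ i, w b i * u b i = 0 := by
  have step1 : ∀ g ∈ genSet n, ∀ u ∈ SnatN n, ∑ b, ∑ i, g b i * u b i = 0 := by
    intro g hg u hu
    have h : SnatN n ≤ LinearMap.ker (dotLn n g) := by
      rw [SnatN, Submodule.span_le]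
      intro x hx
      show dotLn n g x = 0
      simpa [dotLn] using gen_dot_gen n g hg x hx
    simpa [dotLn] using h hu
  intro w hw u hu
  have h : SnatN n ≤ LinearMap.ker (dotLn n u) := by
    rw [SnatN, Submodule.span_le]
    intro x hx
    show dotLn n u x = 0
    have := step1 x hx u hu
    simp only [dotLn, LinearMap.coe_mk, AddHom.coe_mk]
    calc ∑ b, ∑ i, u b i * x b i = ∑ b, ∑ i, x b i * u b i := by simp [mul_comm]
    _ = 0 := this
  have := h hw
  simp only [LinearMap.mem_ker, dotLn, LinearMap.coe_mk, AddHom.coe_mk] at this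
  calc ∑ b, ∑ i, w b i * u b i = ∑ b, ∑ i, u b i * w b i := by simp [mul_comm]
  _ = 0 := this

private lemma hammingNorm_cast (u : Fin 16 → ZMod 2) :
    ((hammingNorm u : ℕ) : ZMod 2) = ∑ i, u i := by
  rw [hammingNorm]
  rw [Finset.card_eq_sum_ones]
  push_cast
  rw [Finset.sum_filter]
  exact Finset.sum_congr rfl fun i _ => zmod2_ite (u i)

/-- For every `n ≥ 1`, the code `S^♮(n)` is an even self-orthogonal code: every
codeword has even Hamming weight, and `S^♮(n) ⊆ (S^♮(n))^⊥`. -/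
theorem SnatN_even_self_orthogonal (n : ℕ) (hn : 1 ≤ n) :
    (∀ w ∈ SnatN n, Even (∑ b, hammingNorm (w b))) ∧
    (∀ w ∈ SnatN n, ∀ u ∈ SnatN n, ∑ b, ∑ i, w b i * u b i = 0) := by
  constructor
  · intro w hw
    have hd := SnatN_dot n w hw w hw
    have hcast : ((∑ b, hammingNorm (w b) : ℕ) : ZMod 2) = 0 := by
      push_cast
      calc (∑ b, ((hammingNorm (w b) : ℕ) : ZMod 2)) = ∑ b, ∑ i, w b i := by
            exact Finset.sum_congr rfl fun b _ => hammingNorm_cast (w b)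
      _ = ∑ b, ∑ i, w b i * w b i := by simp [zmod2_sq]
      _ = 0 := hd
    have h2 : (2 : ℕ) ∣ ∑ b, hammingNorm (w b) :=
      (ZMod.natCast_eq_zero_iff _ 2).mp hcast
    exact even_iff_two_dvd.mpr h2
  · exact SnatN_dot n
end
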